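/- arXiv:1710.02058 — 4 statements merged into one kernel-verified Lean document; each statement's English description precedes it below -/
import Mathlib

section
/- Let d ≥ 1, let X be a finite set of points in ℝ^d (functions Fin d → ℝ), and let p ∈ X. Let D = {q ∈ X : q_i ≥ p_i for all i} (note p ∈ D), and let p* be the lexicographically maximal element of D, i.e. p* ∈ D and every q ∈ D with q ≠ p* satisfies q <_lex p*. Then: (a) no point of X strictly dominates p*, i.e. p* belongs to the skyline of X; and (b) for every subset S ⊆ X such that no element of S dominates p (i.e. no s ∈ S has s_i ≥ p_i for all i), we have p* ∉ S. Hence p* is a skyline point not already in S. -/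
/-- `q` dominates `p` if `q` is at least `p` in every coordinate. -/
def Dominates {d : ℕ} (q p : Fin d → ℝ) : Prop :=
  ∀ i, p i ≤ q i

/-- `q` strictly dominates `p` if `q` is at least `p` in every coordinate and
strictly larger in at least one coordinate. -/
def StrictlyDominates {d : ℕ} (q p : Fin d → ℝ) : Prop :=
  (∀ i, p i ≤ q i) ∧ ∃ i, p i < q i

/-- The skyline of a set of points: those points not strictly dominated by any
other point of the set. -/
def skyline {d : ℕ} (X : Set (Fin d → ℝ)) : Set (Fin d → ℝ) :=
  {p ∈ X | ∀ q ∈ X, ¬ StrictlyDominates q p}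

/-- Lexicographic (strict) order on points: `q <_lex p` iff at the first
coordinate where they differ, `q` is smaller. -/
def LexLt {d : ℕ} (q p : Fin d → ℝ) : Prop :=
  ∃ i, q i < p i ∧ ∀ j, j < i → q j = p j

/-! A point strictly dominating `p*` also dominates `p`, differs from `p*`, and has no
coordinate below the corresponding one of `p*`, so it cannot be lexicographically smaller than
`p*`: this contradicts the maximality of `p*`. -/

section Domination

variable {d : ℕ} {p q r : Fin d → ℝ}

theorem Dominates.trans (hqr : Dominates q r) (hrp : Dominates r p) : Dominates q p :=
  fun i => (hrp i).trans (hqr i)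

theorem Dominates.not_lexLt (hqp : Dominates q p) : ¬ LexLt q p :=
  fun ⟨i, hlt, _⟩ => (hqp i).not_gt hlt

theorem StrictlyDominates.dominates (hqp : StrictlyDominates q p) : Dominates q p :=
  hqp.1

theorem StrictlyDominates.ne (hqp : StrictlyDominates q p) : q ≠ p := by
  rintro rfl
  obtain ⟨i, hlt⟩ := hqp.2
  exact hlt.false

end Domination

theorem maxlex_is_new_skyline_point_general
    (d : ℕ) (X : Set (Fin d → ℝ))
    (p : Fin d → ℝ)
    (D : Set (Fin d → ℝ)) (hD : D = {q ∈ X | Dominates q p})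
    (pstar : Fin d → ℝ) (hpstarD : pstar ∈ D)
    (hmax : ∀ q ∈ D, q ≠ pstar → LexLt q pstar) :
    pstar ∈ skyline X ∧
      ∀ S ⊆ X, (∀ s ∈ S, ¬ Dominates s p) → pstar ∉ S := by
  subst hD
  obtain ⟨hpstarX, hpstar⟩ := hpstarD
  refine ⟨⟨hpstarX, fun q hqX hq => ?_⟩, fun S _ hS hpstarS => hS pstar hpstarS hpstar⟩
  exact hq.dominates.not_lexLt (hmax q ⟨hqX, hq.dominates.trans hpstar⟩ hq.ne)

/-- Correctness core of `SkylineHighDim`: if `p*` is the lexicographically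
maximal point among those points of `X` dominating `p`, then `p*` is a skyline
point of `X`, and `p*` lies in no set `S ⊆ X` none of whose elements
dominates `p`. -/
theorem maxlex_is_new_skyline_point
    (d : ℕ) (hd : 1 ≤ d) (X : Set (Fin d → ℝ)) (hX : X.Finite)
    (p : Fin d → ℝ) (hp : p ∈ X)
    (D : Set (Fin d → ℝ)) (hD : D = {q ∈ X | Dominates q p})
    (pstar : Fin d → ℝ) (hpstarD : pstar ∈ D)
    (hmax : ∀ q ∈ D, q ≠ pstar → LexLt q pstar) :
    pstar ∈ skyline X ∧
      ∀ S ⊆ X, (∀ s ∈ S, ¬ Dominates s p) → pstar ∉ S :=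
  maxlex_is_new_skyline_point_general d X p D hD pstar hpstarD hmax
end

section
/- Let d ≥ 1 be a real number, δ a real with 0 < δ ≤ 1/2, and K a real number with K ≥ d/δ. For i ∈ ℕ set k_i = (d/δ)^{2^i}, and set γ = log₂(log_{d/δ} K). Then for every natural number Z, ∑_{i=1}^{⌈γ⌉+1+Z} log₂(2^i · d · k_i / δ) ≤ 32 · 2^Z · log₂ K. -/
/-!
Put `c = d/δ ≥ 2`, `L = log₂ c ≥ 1` and `M = log_c K ≥ 1`, so that `log₂ K = L · M`.
The `i`-th summand is `log₂ (2^i · c^(2^i + 1)) = i + (2^i + 1) L ≤ L (i + 2^i + 1)`, and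
`∑_{i ≤ N} (i + 2^i + 1) ≤ 2^(N+2)`: as the guesses are squared in every round, their logarithms
grow geometrically and the sum is dominated by its last term. With `N = ⌈log₂ M⌉ + 1 + Z` we get `2^N ≤ 4 M 2^Z`, whence the
sum is at most `16 · 2^Z · L M`.
-/

open Finset Real

lemma sum_Icc_add_two_pow_add_one_le (N : ℕ) :
    ∑ i ∈ Icc 1 N, (i + 2 ^ i + 1) ≤ 2 ^ (N + 2) := by
  induction N with
  | zero => simp
  | succ n ih =>
    rw [sum_Icc_succ_top (by omega)]
    have : n + 1 < 2 ^ (n + 1) := Nat.lt_two_pow_self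
    have : 2 ^ (n + 2) = 2 * 2 ^ (n + 1) := by ring
    have : 2 ^ (n + 1 + 2) = 2 * 2 ^ (n + 2) := by ring
    omega

lemma sum_Icc_add_two_pow_add_one_mul_le {L : ℝ} (hL : 1 ≤ L) (N : ℕ) :
    ∑ i ∈ Icc 1 N, ((i : ℝ) + (2 ^ i + 1) * L) ≤ L * 2 ^ (N + 2) := by
  have hnat : ∑ i ∈ Icc 1 N, ((i : ℝ) + 2 ^ i + 1) ≤ 2 ^ (N + 2) := by
    exact_mod_cast sum_Icc_add_two_pow_add_one_le N
  calc ∑ i ∈ Icc 1 N, ((i : ℝ) + (2 ^ i + 1) * L)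
      ≤ ∑ i ∈ Icc 1 N, L * ((i : ℝ) + 2 ^ i + 1) := by
        gcongr with i
        nlinarith [(Nat.cast_nonneg i : (0 : ℝ) ≤ i)]
    _ = L * ∑ i ∈ Icc 1 N, ((i : ℝ) + 2 ^ i + 1) := (mul_sum ..).symm
    _ ≤ L * 2 ^ (N + 2) := by gcongr

lemma logb_two_pow_mul_pow {c : ℝ} (hc : 0 < c) (i n : ℕ) :
    logb 2 (2 ^ i * c ^ n) = i + n * logb 2 c := by
  rw [logb_mul (by positivity) (by positivity), logb_pow, logb_pow, logb_self_eq_one one_lt_two,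
    mul_one]

lemma pow_ceil_logb_le {b M : ℝ} (hb : 1 < b) (hM : 1 ≤ M) :
    b ^ ⌈logb b M⌉₊ ≤ b * M := by
  have hlog : 0 ≤ logb b M := logb_nonneg hb hM
  calc b ^ ⌈logb b M⌉₊ = b ^ (⌈logb b M⌉₊ : ℝ) := (rpow_natCast b _).symm
    _ ≤ b ^ (logb b M + 1) := rpow_le_rpow_of_exponent_le hb.le (Nat.ceil_lt_add_one hlog).le
    _ = b * M := by
      rw [rpow_add (by linarith), rpow_logb (by linarith) hb.ne' (by linarith), rpow_one, mul_comm]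

/-- Summation bound for the doubling procedure `GuessSkyline`: with
`k_i = (d/δ)^(2^i)` and `γ = log₂(log_{d/δ} K)`, for every number `Z` of extra
iterations, `∑_{i=1}^{⌈γ⌉+1+Z} log₂(2^i · d · k_i / δ) ≤ 32 · 2^Z · log₂ K`. -/
theorem guessSkyline_sum_bound
    (d δ K : ℝ) (hd : 1 ≤ d) (hδ0 : 0 < δ) (hδ : δ ≤ 1 / 2)
    (hK : d / δ ≤ K) (Z : ℕ) :
    ∑ i ∈ Finset.Icc 1 (⌈Real.logb 2 (Real.logb (d / δ) K)⌉₊ + 1 + Z),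
        Real.logb 2 ((2 : ℝ) ^ i * d * (d / δ) ^ (2 ^ i) / δ) ≤
      32 * (2 : ℝ) ^ Z * Real.logb 2 K := by
  set c := d / δ with hc
  have hc2 : 2 ≤ c := by rw [hc, le_div_iff₀ hδ0]; linarith
  have hL : 1 ≤ logb 2 c := (le_logb_iff_rpow_le one_lt_two (by linarith)).2 (by simpa using hc2)
  have hM : 1 ≤ logb c K :=
    (le_logb_iff_rpow_le (by linarith) (by linarith)).2 (by simpa using hK)
  set L := logb 2 c
  set M := logb c K
  set N := ⌈logb 2 M⌉₊ + 1 + Z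
  have hterm (i : ℕ) : logb 2 (2 ^ i * d * c ^ 2 ^ i / δ) = i + (2 ^ i + 1) * L := by
    rw [show (2 : ℝ) ^ i * d * c ^ 2 ^ i / δ = 2 ^ i * c ^ (2 ^ i + 1) by
      rw [pow_succ, hc]; ring, logb_two_pow_mul_pow (by linarith)]
    push_cast; ring
  have hpow : (2 : ℝ) ^ (N + 2) ≤ 16 * M * 2 ^ Z :=
    calc (2 : ℝ) ^ (N + 2) = 8 * 2 ^ ⌈logb 2 M⌉₊ * 2 ^ Z := by ring
      _ ≤ 8 * (2 * M) * 2 ^ Z := by gcongr; exact pow_ceil_logb_le one_lt_two hM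
      _ = 16 * M * 2 ^ Z := by ring
  simp_rw [hterm]
  rw [← mul_logb (a := 2) (b := c) (c := K) (by linarith) (by linarith) (by linarith)]
  calc _ ≤ L * 2 ^ (N + 2) := sum_Icc_add_two_pow_add_one_mul_le hL N
    _ ≤ L * (16 * M * 2 ^ Z) := by gcongr
    _ = 16 * 2 ^ Z * (L * M) := by ring
    _ ≤ 32 * 2 ^ Z * (L * M) := by gcongr; norm_num
end

section
/- Let k ≥ 2 be a real number, δ a real with 0 < δ ≤ 1/8, and Z a natural number. Set M = ⌈log₂ k⌉ + 1 + Z. Then ∑_{i=1}^{M} 2^i · log₂(8^i · 2^i / δ) ≤ 96 · 2^Z · k · (Z + log₂(k/δ)). -/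
/-!
Each summand is `2^i (4i + log₂(1/δ))`, so the sum is at most `2^(M+1) (4M + log₂(1/δ))`.
Since `2^⌈log₂ k⌉ ≤ 2k`, the geometric factor is at most `8 · 2^Z · k`, and
`4M + log₂(1/δ) ≤ 12 (Z + log₂ k + log₂(1/δ))` because `log₂ k ≥ 1` absorbs the additive constant.
-/

open Finset Real

lemma sum_Icc_two_pow_mul_le {n : ℕ} {f : ℕ → ℝ} {C : ℝ} (hf : ∀ i ∈ Icc 1 n, f i ≤ C)
    (hC : 0 ≤ C) : ∑ i ∈ Icc 1 n, (2 : ℝ) ^ i * f i ≤ 2 ^ (n + 1) * C := by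
  have hgeom : ∑ i ∈ Icc 1 n, (2 : ℝ) ^ i ≤ 2 ^ (n + 1) := by
    exact_mod_cast (Nat.geomSum_lt le_rfl fun i hi => Nat.lt_succ_of_le (mem_Icc.1 hi).2).le
  calc ∑ i ∈ Icc 1 n, (2 : ℝ) ^ i * f i ≤ ∑ i ∈ Icc 1 n, (2 : ℝ) ^ i * C :=
        sum_le_sum fun i hi => mul_le_mul_of_nonneg_left (hf i hi) (by positivity)
    _ = (∑ i ∈ Icc 1 n, (2 : ℝ) ^ i) * C := (sum_mul _ _ _).symm
    _ ≤ 2 ^ (n + 1) * C := mul_le_mul_of_nonneg_right hgeom hC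

lemma pow_natCeil_logb_le {b x : ℝ} (hb : 1 < b) (hx : 1 ≤ x) :
    b ^ ⌈logb b x⌉₊ ≤ b * x := by
  calc b ^ ⌈logb b x⌉₊ = b ^ (⌈logb b x⌉₊ : ℝ) := (rpow_natCast b _).symm
    _ ≤ b ^ (logb b x + 1) :=
        rpow_le_rpow_of_exponent_le hb.le (Nat.ceil_lt_add_one (logb_nonneg hb hx)).le
    _ = b * x := by
        rw [rpow_add (by linarith), rpow_logb (by linarith) hb.ne' (by linarith), rpow_one,
          mul_comm]

lemma logb_two_eight_pow_mul_two_pow_div (i : ℕ) {δ : ℝ} (hδ : δ ≠ 0) :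
    logb 2 ((8 : ℝ) ^ i * 2 ^ i / δ) = 4 * i - logb 2 δ := by
  have h : (8 : ℝ) ^ i * 2 ^ i = 2 ^ (4 * i) := by
    rw [← mul_pow, pow_mul]; norm_num
  rw [h, logb_div (by positivity) hδ, logb_pow, logb_self_eq_one one_lt_two]
  push_cast
  ring

/-- Summation bound for the doubling procedure `GuessSkylineHighDim`
(linear-in-`n` terms): with `M = ⌈log₂ k⌉ + 1 + Z`,
`∑_{i=1}^{M} 2^i · log₂(8^i · 2^i / δ) ≤ 96 · 2^Z · k · (Z + log₂(k/δ))`. -/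
theorem guessSkylineHighDim_sum_bound_linear
    (k δ : ℝ) (hk : 2 ≤ k) (hδ0 : 0 < δ) (hδ : δ ≤ 1 / 8) (Z : ℕ) :
    ∑ i ∈ Finset.Icc 1 (⌈Real.logb 2 k⌉₊ + 1 + Z),
        (2 : ℝ) ^ i * Real.logb 2 ((8 : ℝ) ^ i * (2 : ℝ) ^ i / δ) ≤
      96 * (2 : ℝ) ^ Z * k * ((Z : ℝ) + Real.logb 2 (k / δ)) := by
  set M := ⌈logb 2 k⌉₊ + 1 + Z
  have hlogk : 1 ≤ logb 2 k := by
    rw [le_logb_iff_rpow_le one_lt_two (by linarith), rpow_one]; exact hk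
  have hlogδ : logb 2 δ ≤ 0 := logb_nonpos one_lt_two hδ0.le (by linarith)
  have hM : (M : ℝ) ≤ logb 2 k + 2 + Z := by
    have := Nat.ceil_lt_add_one (zero_le_one.trans hlogk)
    push_cast [M]; linarith
  have hpow : (2 : ℝ) ^ (M + 1) ≤ 8 * 2 ^ Z * k := by
    have := pow_natCeil_logb_le one_lt_two (one_le_two.trans hk)
    calc (2 : ℝ) ^ (M + 1) = 4 * 2 ^ Z * 2 ^ ⌈logb 2 k⌉₊ := by simp only [M]; ring
      _ ≤ 4 * 2 ^ Z * (2 * k) := by gcongr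
      _ = 8 * 2 ^ Z * k := by ring
  have hfactor : 0 ≤ 4 * (M : ℝ) - logb 2 δ := by linarith [M.cast_nonneg (α := ℝ)]
  calc ∑ i ∈ Icc 1 M, (2 : ℝ) ^ i * logb 2 ((8 : ℝ) ^ i * 2 ^ i / δ)
      = ∑ i ∈ Icc 1 M, (2 : ℝ) ^ i * (4 * i - logb 2 δ) := by
        simp only [logb_two_eight_pow_mul_two_pow_div _ hδ0.ne']
    _ ≤ 2 ^ (M + 1) * (4 * M - logb 2 δ) :=
        sum_Icc_two_pow_mul_le (fun i hi => by
          have : (i : ℝ) ≤ M := by exact_mod_cast (mem_Icc.1 hi).2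
          linarith) hfactor
    _ ≤ 8 * 2 ^ Z * k * (12 * (Z + logb 2 (k / δ))) := by
        rw [logb_div (by linarith) hδ0.ne']
        exact mul_le_mul hpow (by linarith) hfactor (by positivity)
    _ = 96 * 2 ^ Z * k * (Z + logb 2 (k / δ)) := by ring
end

section
/- Let S be a finite set with |S| = n ≥ 2 and let L ≥ 0 be a real number. Let c_0, c_1, c_2, … : S → ℝ be a sequence of counter functions such that c_0(q) = L for all q ∈ S, and for each t there exist distinct elements a, b ∈ S whose counter values are the two largest values of c_t (i.e. c_t(q) ≤ min(c_t(a), c_t(b)) for all q ∉ {a,b}) such that c_{t+1} agrees with c_t outside {a, b}, c_{t+1}(b) = c_t(b) - 1, and c_{t+1}(a) ∈ {c_t(a) + 1/2, c_t(a) - 1}. Then there exists a time t ≤ 10(n+3)(L+3) at which at most one element q ∈ S has c_t(q) > -1, i.e. every element other than the one with maximal counter has counter value at most -1. -/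
/-!
While at least two counters exceed `-1`, the two selected counters do too, so after the step
no counter is below `-2`. Each step lowers the total of the counters by at least `1/2`, from
`nL` at the start, and a total that stays at least `-2n` allows fewer than `2n(L + 2)` steps.
-/

open Finset

section

variable {S : Type*}

def IsMaxLexStep (f g : S → ℝ) : Prop :=
  ∃ a b : S, a ≠ b ∧
    (∀ q, q ≠ a → q ≠ b → f q ≤ min (f a) (f b)) ∧
    (∀ q, q ≠ a → q ≠ b → g q = f q) ∧
    g b = f b - 1 ∧
    (g a = f a + 1 / 2 ∨ g a = f a - 1)

lemma lt_of_one_lt_ncard_of_forall_le_min {f : S → ℝ} {a b : S} {r : ℝ}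
    (hmax : ∀ q, q ≠ a → q ≠ b → f q ≤ min (f a) (f b))
    (hcard : 1 < {q | r < f q}.ncard) : r < f a := by
  by_contra! ha
  refine hcard.not_ge ?_
  calc {q | r < f q}.ncard ≤ ({b} : Set S).ncard := by
        refine Set.ncard_le_ncard (fun q hq => ?_)
        by_contra hqb
        obtain rfl | hqa := eq_or_ne q a
        · exact (ha.trans_lt hq).false
        · exact (hq.trans_le ((hmax q hqa hqb).trans (min_le_left _ _))).not_ge ha
    _ = 1 := Set.ncard_singleton b

namespace IsMaxLexStep

variable {f g : S → ℝ}

lemma neg_two_le (hstep : IsMaxLexStep f g) (hf : ∀ q, -2 ≤ f q)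
    (hcard : 1 < {q | -1 < f q}.ncard) (q : S) : -2 ≤ g q := by
  obtain ⟨a, b, hab, hmax, hother, hb, ha⟩ := hstep
  have hfa : -1 < f a := lt_of_one_lt_ncard_of_forall_le_min hmax hcard
  have hfb : -1 < f b := lt_of_one_lt_ncard_of_forall_le_min
    (fun q hqb hqa => (hmax q hqa hqb).trans_eq (min_comm _ _)) hcard
  obtain rfl | hqa := eq_or_ne q a
  · rcases ha with ha | ha <;> linarith
  obtain rfl | hqb := eq_or_ne q b
  · linarith
  · rw [hother q hqa hqb]
    exact hf q

lemma sum_le_sub [Fintype S] (hstep : IsMaxLexStep f g) :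
    ∑ q, g q ≤ ∑ q, f q - 1 / 2 := by
  obtain ⟨a, b, hab, -, hother, hb, ha⟩ := hstep
  have hdiff : ∑ q, (g q - f q) = (g a - f a) + (g b - f b) :=
    Fintype.sum_eq_add a b hab fun q ⟨hqa, hqb⟩ => by rw [hother q hqa hqb, sub_self]
  rw [sum_sub_distrib] at hdiff
  rcases ha with ha | ha <;> linarith

end IsMaxLexStep

variable {c : ℕ → S → ℝ}

lemma neg_two_le_of_forall_one_lt_ncard (hstep : ∀ t, IsMaxLexStep (c t) (c (t + 1)))
    (h0 : ∀ q, -2 ≤ c 0 q) {T : ℕ} (hcard : ∀ t < T, 1 < {q | -1 < c t q}.ncard) :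
    ∀ q, -2 ≤ c T q := by
  induction T with
  | zero => exact h0
  | succ T ih =>
    exact (hstep T).neg_two_le (ih fun t ht => hcard t (by omega)) (hcard T (by omega))

variable [Fintype S]

lemma sum_le_sum_zero_sub (hstep : ∀ t, IsMaxLexStep (c t) (c (t + 1))) (t : ℕ) :
    ∑ q, c t q ≤ ∑ q, c 0 q - t / 2 := by
  induction t with
  | zero => simp
  | succ t ih =>
    have := (hstep t).sum_le_sub
    push_cast
    linarith

lemma exists_le_ncard_le_one (hstep : ∀ t, IsMaxLexStep (c t) (c (t + 1)))
    {L : ℝ} (hL : -2 ≤ L) (h0 : ∀ q, c 0 q = L) {T : ℕ}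
    (hT : 2 * Fintype.card S * (L + 2) < T) :
    ∃ t ≤ T, {q | -1 < c t q}.ncard ≤ 1 := by
  by_contra! hcard
  have hlow := neg_two_le_of_forall_one_lt_ncard hstep (fun q => (h0 q).symm ▸ hL)
    fun t ht => hcard t ht.le
  have hsum_ge : Fintype.card S • (-2 : ℝ) ≤ ∑ q, c T q :=
    card_nsmul_le_sum _ _ _ fun q _ => hlow q
  have hsum_le := sum_le_sum_zero_sub hstep T
  simp only [h0, sum_const, card_univ, nsmul_eq_mul] at hsum_ge hsum_le
  linarith

end

theorem maxLex_counter_bound_general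
    {S : Type*} [Fintype S] (n : ℕ) (hcard : Fintype.card S = n)
    (L : ℝ) (hL : 0 ≤ L)
    (c : ℕ → S → ℝ) (h0 : ∀ q, c 0 q = L)
    (hstep : ∀ t, ∃ a b : S, a ≠ b ∧
      (∀ q, q ≠ a → q ≠ b → c t q ≤ min (c t a) (c t b)) ∧
      (∀ q, q ≠ a → q ≠ b → c (t + 1) q = c t q) ∧
      c (t + 1) b = c t b - 1 ∧
      (c (t + 1) a = c t a + 1 / 2 ∨ c (t + 1) a = c t a - 1)) :
    ∃ t : ℕ, (t : ℝ) ≤ 10 * ((n : ℝ) + 3) * (L + 3) ∧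
      {q : S | -1 < c t q}.ncard ≤ 1 := by
  set x : ℝ := 2 * n * (L + 2)
  have hx : 0 ≤ x := by positivity
  obtain ⟨t, ht, hcount⟩ := exists_le_ncard_le_one (T := ⌊x⌋₊ + 1) hstep (by linarith) h0
    (by rw [hcard]; push_cast; exact Nat.lt_floor_add_one x)
  refine ⟨t, ?_, hcount⟩
  calc (t : ℝ) ≤ ⌊x⌋₊ + 1 := by exact_mod_cast ht
    _ ≤ x + 1 := by gcongr; exact Nat.floor_le hx
    _ ≤ 10 * ((n : ℝ) + 3) * (L + 3) := by
        have : (0 : ℝ) ≤ n := n.cast_nonneg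
        nlinarith

/-- Deterministic potential claim for `MaxLex`: counters over a finite set `S`
of size `n ≥ 2` all start at `L ≥ 0`; at every step the two elements `a, b`
carrying the two largest counter values are selected, all other counters are
unchanged, the counter of `b` decreases by `1`, and the counter of `a` either
increases by `1/2` or decreases by `1`. Then within `10(n+3)(L+3)` steps there
is a time at which at most one element has a counter value above `-1`. -/
theorem maxLex_counter_bound
    {S : Type*} [Fintype S] (n : ℕ) (hcard : Fintype.card S = n) (hn : 2 ≤ n)
    (L : ℝ) (hL : 0 ≤ L)
    (c : ℕ → S → ℝ) (h0 : ∀ q, c 0 q = L)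
    (hstep : ∀ t, ∃ a b : S, a ≠ b ∧
      (∀ q, q ≠ a → q ≠ b → c t q ≤ min (c t a) (c t b)) ∧
      (∀ q, q ≠ a → q ≠ b → c (t + 1) q = c t q) ∧
      c (t + 1) b = c t b - 1 ∧
      (c (t + 1) a = c t a + 1 / 2 ∨ c (t + 1) a = c t a - 1)) :
    ∃ t : ℕ, (t : ℝ) ≤ 10 * ((n : ℝ) + 3) * (L + 3) ∧
      {q : S | -1 < c t q}.ncard ≤ 1 :=
  maxLex_counter_bound_general n hcard L hL c h0 hstep
end
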